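/- Fix a positive integer k. For each j ∈ {0,…,k}, let r_j = (∑_{t=0}^{k} C(k,t)·e_j(a_t)²)^{-1/2}, where a_t ∈ {-1,1}^k is any vector with exactly t coordinates equal to −1 (this sum is strictly positive, e.g. because e_j(1,…,1) = C(k,j) > 0). Then the real (k+1)×(k+1) matrix M with entries M_{i,j} = √C(k,i)·e_j(a_i)·r_j is an orthogonal matrix, i.e., Mᵀ·M = I. (This is the 'Squashed QFT' matrix L·D̃_k·R.) -/

import Mathlib

/-- The `j`-th elementary symmetric polynomial in `k` real variables:
`e_j(x) = ∑_{A ⊆ {1,…,k}, |A| = j} ∏_{i∈A} x_i`. -/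
def esymmR (k j : ℕ) (x : Fin k → ℝ) : ℝ :=
  ∑ A ∈ Finset.powersetCard j (Finset.univ : Finset (Fin k)), ∏ i ∈ A, x i

/-!
Write `χ_s` for the ±1 vector of length `k` that is `-1` exactly on `s`. For sets `A`, `s` the
sign `∏_{i∈A} χ_s(i) = (-1)^|A ∩ s|` is symmetric in `A` and `s`, so summing the product of the
`A`- and `B`-signs over all `s` gives `∏_i (χ_A(i) χ_B(i) + 1)`, which is `2^k` if `A = B` and
`0` otherwise. Expanding `e_j` and `e_j'` as sums of such signs, the columns `(e_j(χ_s))_s` are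
orthogonal with squared norm `2^k C(k,j)`. Since `e_j(χ_s)` only depends on `|s|`, grouping the sets
by size turns this into the orthogonality of the columns `√C(k,t) e_j(a_t)` of `M`; the factor
`r_j` normalises them.
-/

open Finset Matrix

section Walsh

variable {ι : Type*} [DecidableEq ι]

def signVec (s : Finset ι) (i : ι) : ℝ := if i ∈ s then -1 else 1

lemma signVec_mul_self (s : Finset ι) (i : ι) : signVec s i * signVec s i = 1 := by
  unfold signVec; split_ifs <;> norm_num

lemma prod_signVec_comm (A s : Finset ι) : ∏ i ∈ A, signVec s i = ∏ i ∈ s, signVec A i := by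
  simp only [signVec, prod_ite_mem, inter_comm]

theorem sum_prod_signVec_mul_prod_signVec [Fintype ι] (A B : Finset ι) :
    ∑ s : Finset ι, (∏ i ∈ A, signVec s i) * ∏ i ∈ B, signVec s i =
      if A = B then 2 ^ Fintype.card ι else 0 := by
  simp only [prod_signVec_comm A, prod_signVec_comm B, ← prod_mul_distrib]
  rw [← powerset_univ, ← prod_add_one]
  split_ifs with hAB
  · subst hAB
    simp [signVec_mul_self, one_add_one_eq_two]
  · obtain ⟨i, hi⟩ : ∃ i, ¬(i ∈ A ↔ i ∈ B) := by
      by_contra! h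
      exact hAB (Finset.ext h)
    refine prod_eq_zero (mem_univ i) ?_
    by_cases hA : i ∈ A <;> by_cases hB : i ∈ B <;> simp_all [signVec]

end Walsh

/-- The Krawtchouk polynomial `K_j(t)`, i.e. the value `e_j(a_t)` of the `j`-th elementary
symmetric function on a `±1` vector of length `k` with exactly `t` entries `-1`. -/
def krawtchouk (k j t : ℕ) : ℝ :=
  (Multiset.replicate t (-1 : ℝ) + Multiset.replicate (k - t) 1).esymm j

lemma map_univ_val_eq_replicate {ι : Type*} [Fintype ι] {x : ι → ℝ}
    (hx : ∀ i, x i = 1 ∨ x i = -1) :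
    univ.val.map x = Multiset.replicate #{i | x i = -1} (-1) +
      Multiset.replicate (Fintype.card ι - #{i | x i = -1}) 1 := by
  rw [← Multiset.filter_add_not (fun i => x i = -1) univ.val, Multiset.map_add]
  congr 1
  · rw [Multiset.eq_replicate]
    exact ⟨by simp [← Finset.filter_val], by simp⟩
  · rw [Multiset.eq_replicate]
    refine ⟨?_, by simpa using fun i hi => (hx i).resolve_right hi⟩
    have := card_filter_add_card_filter_not (s := univ) fun i => x i = -1
    simp only [card_univ] at this
    simp only [Multiset.card_map, ← Finset.filter_val, card_val]
    omega

section Krawtchouk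

variable {k : ℕ}

lemma esymmR_eq_krawtchouk (j : ℕ) {x : Fin k → ℝ} (hx : ∀ i, x i = 1 ∨ x i = -1) :
    esymmR k j x = krawtchouk k j #{i | x i = -1} := by
  rw [esymmR, ← Finset.esymm_map_val, map_univ_val_eq_replicate hx, Fintype.card_fin, krawtchouk]

lemma esymmR_signVec (j : ℕ) (s : Finset (Fin k)) :
    esymmR k j (signVec s) = krawtchouk k j #s := by
  rw [esymmR_eq_krawtchouk j fun i => ?_]
  · congr 2; ext i; by_cases hi : i ∈ s <;> norm_num [signVec, hi]
  · unfold signVec; split_ifs <;> simp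

theorem sum_esymmR_signVec_mul (j j' : ℕ) :
    ∑ s : Finset (Fin k), esymmR k j (signVec s) * esymmR k j' (signVec s) =
      if j = j' then 2 ^ k * (k.choose j : ℝ) else 0 := by
  simp only [esymmR, sum_mul_sum]
  calc _ = ∑ A ∈ powersetCard j univ, ∑ B ∈ powersetCard j' univ,
        ∑ s : Finset (Fin k), (∏ i ∈ A, signVec s i) * ∏ i ∈ B, signVec s i := by
        rw [sum_comm]
        exact sum_congr rfl fun A _ => sum_comm
    _ = ∑ A ∈ powersetCard j (univ : Finset (Fin k)),
        if A ∈ powersetCard j' univ then (2 : ℝ) ^ k else 0 := by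
        simp only [sum_prod_signVec_mul_prod_signVec, Fintype.card_fin, sum_ite_eq]
    _ = _ := by
      split_ifs with h
      · subst h
        rw [sum_congr rfl fun A hA => if_pos hA]
        simp [mul_comm]
      · refine sum_eq_zero fun A hA => if_neg ?_
        rw [mem_powersetCard_univ] at hA ⊢
        omega

theorem sum_choose_mul_krawtchouk_mul (j j' : ℕ) :
    ∑ t ∈ range (k + 1), (k.choose t : ℝ) * (krawtchouk k j t * krawtchouk k j' t) =
      if j = j' then 2 ^ k * (k.choose j : ℝ) else 0 := by
  rw [← sum_esymmR_signVec_mul]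
  simp only [esymmR_signVec]
  rw [← powerset_univ, sum_powerset_apply_card (fun m => krawtchouk k j m * krawtchouk k j' m),
    card_univ, Fintype.card_fin]
  simp only [nsmul_eq_mul]

noncomputable def krawtchoukMatrix (k : ℕ) : Matrix (Fin (k + 1)) (Fin (k + 1)) ℝ :=
  of fun i j => √(k.choose i) * krawtchouk k j i

theorem krawtchoukMatrix_transpose_mul_self :
    (krawtchoukMatrix k)ᵀ * krawtchoukMatrix k = diagonal fun j : Fin (k + 1) => 2 ^ k * (k.choose j : ℝ) := by
  ext j j'
  have hsum := sum_choose_mul_krawtchouk_mul (k := k) j j'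
  simp only [krawtchoukMatrix, mul_apply, transpose_apply, of_apply, diagonal_apply,
    Fin.val_inj] at hsum ⊢
  rw [← hsum, ← Fin.sum_univ_eq_sum_range
    (fun t => (k.choose t : ℝ) * (krawtchouk k j t * krawtchouk k j' t))]
  refine sum_congr rfl fun t _ => ?_
  rw [mul_mul_mul_comm, Real.mul_self_sqrt (Nat.cast_nonneg _)]

end Krawtchouk

theorem Matrix.transpose_mul_self_eq_one_of_orthogonal_cols {m n : Type*} [Fintype m]
    [Fintype n] [DecidableEq n] (V : Matrix m n ℝ) {c : n → ℝ} (hV : Vᵀ * V = diagonal c)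
    (hc : ∀ j, 0 < c j) :
    (V * diagonal fun j => (√(c j))⁻¹)ᵀ * (V * diagonal fun j => (√(c j))⁻¹) = 1 := by
  rw [transpose_mul, diagonal_transpose, Matrix.mul_assoc, ← Matrix.mul_assoc Vᵀ, hV,
    diagonal_mul_diagonal, diagonal_mul_diagonal, ← diagonal_one]
  congr 1; ext j
  rw [mul_left_comm, ← mul_inv, Real.mul_self_sqrt (hc j).le, mul_inv_cancel₀ (hc j).ne']

theorem stmt_4_general (k : ℕ) (a : ℕ → Fin k → ℝ)
    (ha1 : ∀ i ≤ k, ∀ t, a i t = 1 ∨ a i t = -1)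
    (ha2 : ∀ i ≤ k, (Finset.univ.filter fun t => a i t = -1).card = i)
    (r : ℕ → ℝ)
    (hr : ∀ j, r j =
      (Real.sqrt (∑ t ∈ Finset.range (k + 1),
        (k.choose t : ℝ) * (esymmR k j (a t)) ^ 2))⁻¹)
    (M : Matrix (Fin (k + 1)) (Fin (k + 1)) ℝ)
    (hM : ∀ i j, M i j =
      Real.sqrt (k.choose (i : ℕ) : ℝ) * esymmR k (j : ℕ) (a (i : ℕ)) * r (j : ℕ)) :
    M.transpose * M = 1 := by
  have he : ∀ t ≤ k, ∀ j, esymmR k j (a t) = krawtchouk k j t := fun t ht j => by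
    rw [esymmR_eq_krawtchouk j (ha1 t ht), ha2 t ht]
  let c : Fin (k + 1) → ℝ := fun j => 2 ^ k * k.choose j
  have hrc : ∀ j : Fin (k + 1), r j = (√(c j))⁻¹ := fun j => by
    have hsum := sum_choose_mul_krawtchouk_mul (k := k) j j
    rw [if_pos rfl] at hsum
    rw [hr, show c j = _ from hsum.symm]
    congr 2
    refine sum_congr rfl fun t ht => ?_
    rw [he t (mem_range_succ_iff.1 ht), sq]
  have hMV : M = krawtchoukMatrix k * diagonal fun j => (√(c j))⁻¹ := by
    ext i j
    simp [krawtchoukMatrix, hM, hrc, he i i.is_le]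
  rw [hMV]
  exact transpose_mul_self_eq_one_of_orthogonal_cols _ krawtchoukMatrix_transpose_mul_self
    fun j => by
      have := Nat.choose_pos j.is_le
      positivity

/-- Fix a positive integer `k`.  For each `i ∈ {0,…,k}` let
`a i ∈ {-1,1}^k` be a vector with exactly `i` coordinates equal to `−1`, and for
`j ∈ {0,…,k}` let `r j = (∑_{t=0}^{k} C(k,t)·e_j(a t)²)^{-1/2}`.  Then the real
`(k+1)×(k+1)` matrix `M` with entries `M i j = √C(k,i)·e_j(a i)·r j` is an
orthogonal matrix, i.e. `Mᵀ·M = I`. -/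
theorem stmt_4 (k : ℕ) (hk : 0 < k) (a : ℕ → Fin k → ℝ)
    (ha1 : ∀ i ≤ k, ∀ t, a i t = 1 ∨ a i t = -1)
    (ha2 : ∀ i ≤ k, (Finset.univ.filter fun t => a i t = -1).card = i)
    (r : ℕ → ℝ)
    (hr : ∀ j, r j =
      (Real.sqrt (∑ t ∈ Finset.range (k + 1),
        (k.choose t : ℝ) * (esymmR k j (a t)) ^ 2))⁻¹)
    (M : Matrix (Fin (k + 1)) (Fin (k + 1)) ℝ)
    (hM : ∀ i j, M i j =
      Real.sqrt (k.choose (i : ℕ) : ℝ) * esymmR k (j : ℕ) (a (i : ℕ)) * r (j : ℕ)) :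
    M.transpose * M = 1 :=
  stmt_4_general k a ha1 ha2 r hr M hM
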